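/- arXiv:cs/0610137 — 2 statements merged into one kernel-verified Lean document; each statement's English description precedes it below -/
import Mathlib

section
/- orElse is associative up to weak atomic equivalence: M₁ orElse (M₂ orElse M₃) ≈ (M₁ orElse M₂) orElse M₃. -/
/-- Actions: reads and writes of names. -/
inductive Act (N : Type*) where
  | rd (a : N)
  | wt (a : N)

/-- Multiset of names written in a log. -/
def Wl {N : Type*} : List (Act N) → Multiset N
  | [] => 0
  | .wt a :: δ => Wl δ + {a}
  | .rd _ :: δ => Wl δ

/-- Multiset of names read in a log. -/
def Rl {N : Type*} : List (Act N) → Multiset N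
  | [] => 0
  | .rd a :: δ => Rl δ + {a}
  | .wt _ :: δ => Rl δ

/-- Atomic expressions. -/
inductive Expr (N : Type*) where
  | done
  | retry
  | rd (a : N) (M : Expr N)
  | wt (a : N) (M : Expr N)
  | orElse (M₁ M₂ : Expr N)

/-- Ongoing atomic expressions. -/
inductive Ong (N : Type*) where
  | block (M : Expr N) (σ : Multiset N) (δ : List (Act N))
  | orElse (A B : Ong N)

/-- One-step reduction of ongoing expressions. -/
inductive Step {N : Type*} : Ong N → Ong N → Prop where
  | rdOk {a : N} {M σ δ} (h : Rl δ + {a} ≤ σ) :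
      Step (.block (.rd a M) σ δ) (.block M σ (δ ++ [.rd a]))
  | rdFail {a : N} {M σ δ} (h : ¬ Rl δ + {a} ≤ σ) :
      Step (.block (.rd a M) σ δ) (.block .retry σ δ)
  | wr {a : N} {M σ δ} :
      Step (.block (.wt a M) σ δ) (.block M σ (δ ++ [.wt a]))
  | orE {M₁ M₂ : Expr N} {σ δ} :
      Step (.block (.orElse M₁ M₂) σ δ) (.orElse (.block M₁ σ δ) (.block M₂ σ δ))
  | orFail {σ : Multiset N} {δ B} : Step (.orElse (.block .retry σ δ) B) B
  | orEnd {σ : Multiset N} {δ B} : Step (.orElse (.block .done σ δ) B) (.block .done σ δ)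
  | congL {A A' B : Ong N} (h : Step A A') : Step (.orElse A B) (.orElse A' B)
  | congR {A B B' : Ong N} (h : Step B B') : Step (.orElse A B) (.orElse A B')

/-- Multi-step reduction. -/
def Steps {N : Type*} : Ong N → Ong N → Prop := Relation.ReflTransGen Step

/-- Logs with the same effect on state σ. -/
def EffEq {N : Type*} [DecidableEq N] (σ : Multiset N) (δ δ' : List (Act N)) : Prop :=
  σ - Rl δ + Wl δ = σ - Rl δ' + Wl δ'

/-- Weak atomic equivalence. -/
def AEq {N : Type*} [DecidableEq N] (M M' : Expr N) : Prop :=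
  ∀ σ : Multiset N,
    ((∃ δ, Steps (.block M σ []) (.block .retry σ δ)) ∧
     (∃ δ', Steps (.block M' σ []) (.block .retry σ δ'))) ∨
    (∃ δ δ', Steps (.block M σ []) (.block .done σ δ) ∧
             Steps (.block M' σ []) (.block .done σ δ') ∧ EffEq σ δ δ')

/-- Prefixing an action onto an expression. -/
def pre {N : Type*} : Act N → Expr N → Expr N
  | .rd a, M => .rd a M
  | .wt a, M => .wt a M

/-- The pure sequence expression α₁.….αₙ.end. -/
def seq {N : Type*} (K : List (Act N)) : Expr N := K.foldr pre .done

/-- Right-nested orElse of a nonempty list of expressions. -/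
def ors {N : Type*} : Expr N → List (Expr N) → Expr N
  | M, [] => M
  | M, M' :: rest => .orElse M (ors M' rest)

/-- Deterministic evaluator for atomic expressions. -/
def eval {N : Type*} [DecidableEq N] : Expr N → Multiset N → List (Act N) → Option (List (Act N))
  | .done, _, δ => some δ
  | .retry, _, _ => none
  | .rd a M, σ, δ => if Rl δ + {a} ≤ σ then eval M σ (δ ++ [.rd a]) else none
  | .wt a M, σ, δ => eval M σ (δ ++ [.wt a])
  | .orElse M₁ M₂, σ, δ =>
      match eval M₁ σ δ with
      | some δ' => some δ'
      | none => eval M₂ σ δ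

lemma steps_orL {N : Type*} {A A' B : Ong N} (h : Steps A A') :
    Steps (.orElse A B) (.orElse A' B) :=
by
  induction h with
  | refl => exact Relation.ReflTransGen.refl
  | tail _ s ih => exact Relation.ReflTransGen.tail ih (Step.congL s)

lemma eval_steps {N : Type*} [DecidableEq N] : ∀ (M : Expr N) (σ : Multiset N) (δ : List (Act N)),
    (∀ δ', eval M σ δ = some δ' → Steps (.block M σ δ) (.block .done σ δ')) ∧
    (eval M σ δ = none → ∃ δ'', Steps (.block M σ δ) (.block .retry σ δ'')) := by
  intro M
  induction M with
  | done =>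
    intro σ δ
    refine ⟨fun δ' h => ?_, fun h => by simp [eval] at h⟩
    simp [eval] at h; subst h; exact Relation.ReflTransGen.refl
  | retry =>
    intro σ δ
    exact ⟨fun δ' h => by simp [eval] at h, fun _ => ⟨δ, Relation.ReflTransGen.refl⟩⟩
  | rd a M ih =>
    intro σ δ
    by_cases hle : Rl δ + {a} ≤ σ
    · refine ⟨fun δ' h => ?_, fun h => ?_⟩
      · simp only [eval, if_pos hle] at h
        exact Relation.ReflTransGen.head (Step.rdOk hle) ((ih σ (δ ++ [Act.rd a])).1 δ' h)
      · simp only [eval, if_pos hle] at h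
        obtain ⟨δ'', hs⟩ := (ih σ (δ ++ [Act.rd a])).2 h
        exact ⟨δ'', Relation.ReflTransGen.head (Step.rdOk hle) hs⟩
    · refine ⟨fun δ' h => ?_, fun _ => ?_⟩
      · simp [eval, if_neg hle] at h
      · exact ⟨δ, Relation.ReflTransGen.single (Step.rdFail hle)⟩
  | wt a M ih =>
    intro σ δ
    refine ⟨fun δ' h => ?_, fun h => ?_⟩
    · simp only [eval] at h
      exact Relation.ReflTransGen.head Step.wr ((ih σ (δ ++ [Act.wt a])).1 δ' h)
    · simp only [eval] at h
      obtain ⟨δ'', hs⟩ := (ih σ (δ ++ [Act.wt a])).2 h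
      exact ⟨δ'', Relation.ReflTransGen.head Step.wr hs⟩
  | orElse M₁ M₂ ih₁ ih₂ =>
    intro σ δ
    cases h₁ : eval M₁ σ δ with
    | some δ₁ =>
      refine ⟨fun δ' h => ?_, fun h => ?_⟩
      · simp only [eval, h₁] at h
        obtain rfl : δ₁ = δ' := by injection h
        exact Relation.ReflTransGen.head Step.orE
          (Relation.ReflTransGen.tail (steps_orL ((ih₁ σ δ).1 δ₁ h₁)) Step.orEnd)
      · simp [eval, h₁] at h
    | none =>
      obtain ⟨δ₁, hs₁⟩ := (ih₁ σ δ).2 h₁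
      have base : Steps (Ong.block (.orElse M₁ M₂) σ δ) (Ong.block M₂ σ δ) :=
        Relation.ReflTransGen.head Step.orE
          (Relation.ReflTransGen.tail (steps_orL hs₁) Step.orFail)
      refine ⟨fun δ' h => ?_, fun h => ?_⟩
      · simp only [eval, h₁] at h
        exact base.trans ((ih₂ σ δ).1 δ' h)
      · simp only [eval, h₁] at h
        obtain ⟨δ'', hs₂⟩ := (ih₂ σ δ).2 h
        exact ⟨δ'', base.trans hs₂⟩

lemma eval_assoc {N : Type*} [DecidableEq N] (M₁ M₂ M₃ : Expr N) (σ : Multiset N)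
    (δ : List (Act N)) :
    eval (.orElse M₁ (.orElse M₂ M₃)) σ δ = eval (.orElse (.orElse M₁ M₂) M₃) σ δ := by
  simp only [eval]
  cases eval M₁ σ δ <;> simp

/-- orElse is associative up to weak atomic equivalence. -/
theorem stmt10 {N : Type*} [DecidableEq N] (M₁ M₂ M₃ : Expr N) :
    AEq (.orElse M₁ (.orElse M₂ M₃)) (.orElse (.orElse M₁ M₂) M₃) := by
  intro σ
  cases h : eval (.orElse M₁ (.orElse M₂ M₃)) σ [] with
  | some δ =>
    refine Or.inr ⟨δ, δ, ?_, ?_, rfl⟩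
    · exact (eval_steps _ σ []).1 δ h
    · exact (eval_steps _ σ []).1 δ (by rw [← eval_assoc]; exact h)
  | none =>
    refine Or.inl ⟨(eval_steps _ σ []).2 h, (eval_steps _ σ []).2 ?_⟩
    rw [← eval_assoc]; exact h
end

section
/- Redundant branch elimination: if K₁,…,Kₙ are pure action sequences and R(K_j) ⊆ R(Kₙ) for some j < n, then K₁ orElse ⋯ orElse Kₙ₋₁ orElse Kₙ ≈ K₁ orElse ⋯ orElse Kₙ₋₁ (with respect to weak atomic equivalence). -/
/-
A pure sequence `seq K` started in state `σ` is deterministic: it ends with log `K` when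
`R(K) ≤ σ` and retries otherwise. An `orElse` chain therefore ends with the log of its first
branch `Kᵢ` with `R(Kᵢ) ≤ σ` and retries when there is none. If some branch `Kⱼ` with
`j < n` fits, the first fitting branch lies among `K₁, …, Kₙ₋₁` and both sides end with the
same log; if none does, then `R(Kⱼ) ≤ R(Kₙ)` shows that `Kₙ` does not fit either, and both
sides retry.
-/

section Reduction

variable {N : Type*}

def EndsWith (M : Expr N) (σ : Multiset N) (δ : List (Act N)) : Prop :=
  Steps (.block M σ []) (.block .done σ δ)

def Retries (M : Expr N) (σ : Multiset N) : Prop :=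
  ∃ δ, Steps (.block M σ []) (.block .retry σ δ)

theorem Rl_append (δ₁ δ₂ : List (Act N)) : Rl (δ₁ ++ δ₂) = Rl δ₁ + Rl δ₂ := by
  induction δ₁ with
  | nil => simp [Rl]
  | cons α δ ih => cases α <;> simp [Rl, ih, add_right_comm]

theorem Rl_concat_add (δ : List (Act N)) (α : Act N) (K : List (Act N)) :
    Rl (δ ++ [α]) + Rl K = Rl δ + Rl (α :: K) := by
  rw [← Rl_append, ← Rl_append, List.append_assoc, List.singleton_append]

theorem Steps.orElse_left {A A' B : Ong N} (h : Steps A A') :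
    Steps (.orElse A B) (.orElse A' B) := by
  induction h with
  | refl => exact .refl
  | tail _ hstep ih => exact ih.tail (.congL hstep)

theorem steps_seq_done {σ : Multiset N} :
    ∀ {K δ₀ : List (Act N)}, Rl δ₀ + Rl K ≤ σ →
      Steps (.block (seq K) σ δ₀) (.block .done σ (δ₀ ++ K))
  | [], δ₀, _ => by rw [List.append_nil]; exact .refl
  | α :: K, δ₀, h => by
    have hrest : Steps (.block (seq K) σ (δ₀ ++ [α])) (.block .done σ (δ₀ ++ α :: K)) := by
      simpa using steps_seq_done ((Rl_concat_add δ₀ α K).trans_le h)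
    cases α with
    | rd a =>
      have hread : Rl δ₀ + {a} ≤ σ := by
        simpa [Rl_append, Rl] using le_self_add.trans ((Rl_concat_add δ₀ (.rd a) K).trans_le h)
      exact .head (.rdOk hread) hrest
    | wt a => exact .head .wr hrest

theorem exists_steps_seq_retry {σ : Multiset N} :
    ∀ {K δ₀ : List (Act N)}, Rl δ₀ ≤ σ → ¬ Rl δ₀ + Rl K ≤ σ →
      ∃ δ, Steps (.block (seq K) σ δ₀) (.block .retry σ δ)
  | [], δ₀, h₀, h => absurd (by simpa [Rl] using h₀) h
  | .rd a :: K, δ₀, _, h => by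
    by_cases hread : Rl δ₀ + {a} ≤ σ
    · have h₀' : Rl (δ₀ ++ [.rd a]) ≤ σ := by simpa [Rl_append, Rl] using hread
      obtain ⟨δ, hδ⟩ := exists_steps_seq_retry h₀' (Rl_concat_add δ₀ (.rd a) K ▸ h)
      exact ⟨δ, .head (.rdOk hread) hδ⟩
    · exact ⟨δ₀, .single (.rdFail hread)⟩
  | .wt a :: K, δ₀, h₀, h => by
    have h₀' : Rl (δ₀ ++ [.wt a]) ≤ σ := by simpa [Rl_append, Rl] using h₀
    obtain ⟨δ, hδ⟩ := exists_steps_seq_retry h₀' (Rl_concat_add δ₀ (.wt a) K ▸ h)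
    exact ⟨δ, .head .wr hδ⟩

theorem seq_endsWith {K : List (Act N)} {σ : Multiset N} (h : Rl K ≤ σ) :
    EndsWith (seq K) σ K := by
  simpa [EndsWith] using steps_seq_done (δ₀ := []) (by simpa [Rl] using h)

theorem seq_retries {K : List (Act N)} {σ : Multiset N} (h : ¬ Rl K ≤ σ) :
    Retries (seq K) σ :=
  exists_steps_seq_retry (δ₀ := []) (by simp [Rl]) (by simpa [Rl] using h)

theorem ors_endsWith {M : Expr N} {σ : Multiset N} {δ : List (Act N)} (h : EndsWith M σ δ) :
    ∀ Ms : List (Expr N), EndsWith (ors M Ms) σ δ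
  | [] => h
  | _ :: _ => .head .orE ((Steps.orElse_left h).tail .orEnd)

theorem ors_steps_of_retries {M : Expr N} {σ : Multiset N} (h : Retries M σ)
    (M' : Expr N) (Ms : List (Expr N)) :
    Steps (.block (ors M (M' :: Ms)) σ []) (.block (ors M' Ms) σ []) :=
  let ⟨_, hδ⟩ := h
  .head .orE ((Steps.orElse_left hδ).tail .orFail)

theorem ors_retries {σ : Multiset N} :
    ∀ {M : Expr N} {Ms : List (Expr N)}, (∀ M' ∈ M :: Ms, Retries M' σ) → Retries (ors M Ms) σ
  | M, [], h => h M List.mem_cons_self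
  | M, M' :: Ms, h =>
    let ⟨δ, hδ⟩ := ors_retries (List.forall_mem_cons.mp h).2
    ⟨δ, (ors_steps_of_retries (h M List.mem_cons_self) M' Ms).trans hδ⟩

theorem exists_ors_seq_append_endsWith {σ : Multiset N} :
    ∀ {K : List (Act N)} {Ks : List (List (Act N))}, (∃ K' ∈ K :: Ks, Rl K' ≤ σ) →
      ∃ δ, ∀ Ms : List (Expr N), EndsWith (ors (seq K) (Ks.map seq ++ Ms)) σ δ
  | K, Ks, hfit => by
    by_cases hK : Rl K ≤ σ
    · exact ⟨K, fun Ms => ors_endsWith (seq_endsWith hK) _⟩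
    · cases Ks with
      | nil => simp_all
      | cons K' Ks =>
        have hfit' : ∃ K'' ∈ K' :: Ks, Rl K'' ≤ σ := by
          obtain ⟨K'', hmem, hle⟩ := hfit
          exact ⟨K'', (List.mem_cons.mp hmem).resolve_left (by rintro rfl; exact hK hle), hle⟩
        obtain ⟨δ, hδ⟩ := exists_ors_seq_append_endsWith hfit'
        exact ⟨δ, fun Ms => (ors_steps_of_retries (seq_retries hK) _ _).trans (hδ Ms)⟩

end Reduction

/-- Redundant branch elimination: if some earlier branch's reads are included in
the reads of the last branch Kₙ, then Kₙ may be dropped up to ≈. -/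
theorem stmt16 {N : Type*} [DecidableEq N]
    (hd Kn : List (Act N)) (tl : List (List (Act N)))
    (h : ∃ Kj ∈ hd :: tl, Rl Kj ≤ Rl Kn) :
    AEq (ors (seq hd) (tl.map seq ++ [seq Kn])) (ors (seq hd) (tl.map seq)) := by
  intro σ
  by_cases hfit : ∃ K ∈ hd :: tl, Rl K ≤ σ
  · obtain ⟨δ, hδ⟩ := exists_ors_seq_append_endsWith hfit
    exact .inr ⟨δ, δ, hδ [seq Kn], List.append_nil (tl.map seq) ▸ hδ [], rfl⟩
  · push Not at hfit
    obtain ⟨hhd, htl⟩ := List.forall_mem_cons.mp hfit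
    have hKn : ¬ Rl Kn ≤ σ := by
      obtain ⟨Kj, hKj, hle⟩ := h
      exact fun hKn => hfit Kj hKj (hle.trans hKn)
    refine .inl ⟨ors_retries ?_, ors_retries ?_⟩ <;>
      simp only [List.forall_mem_cons, List.forall_mem_append, List.forall_mem_map]
    · exact ⟨seq_retries hhd, fun K hK => seq_retries (htl K hK), seq_retries hKn, by simp⟩
    · exact ⟨seq_retries hhd, fun K hK => seq_retries (htl K hK)⟩
end
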